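/- arXiv:2407.03840 — 4 statements merged into one kernel-verified Lean document; each statement's English description precedes it below -/
import Mathlib

section
/- Let H be a real Hilbert space, Γ ⊆ H linearly independent, (Ω, d_Ω) a metric space, and ϱ : Ω → Γ a uniformly continuous bijection. If (X_n)_{n∈ℕ} is a nested sequence of finite subsets of Ω with fill distance h_{X_n,Ω} := sup_{x∈Ω} min_{y∈X_n} d_Ω(x,y) → 0 as n → ∞, then ‖f − I_{ϱ(X_n)}(f)‖ → 0 as n → ∞ for every f in the closed linear span H_Γ of Γ. -/
open Filter
open scoped RealInnerProductSpace ENNReal Topology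

/-- Generalized interpolation operator: orthogonal projection onto the span of `Λ`. -/
noncomputable def interp {H : Type*} [NormedAddCommGroup H] [InnerProductSpace ℝ H]
    (Λ : Finset H) (f : H) : H :=
  haveI : FiniteDimensional ℝ (Submodule.span ℝ (Λ : Set H)) :=
    FiniteDimensional.span_of_finite ℝ Λ.finite_toSet
  (Submodule.orthogonalProjectionOnto (Submodule.span ℝ (Λ : Set H)) f : H)

/-- Generalized power function: distance from `g` to the span of `Λ`. -/
noncomputable def powerFn {H : Type*} [NormedAddCommGroup H] [InnerProductSpace ℝ H]
    (Λ : Finset H) (g : H) : ℝ := ‖g - interp Λ g‖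

/-!
The residual `f ↦ f - I_Λ f` is the orthogonal projection onto `(span Λ)ᗮ`, so the residual
maps for `Λ = ϱ(Xₙ)` form a family of linear maps of norm at most `1`. For such a family the set
of vectors along which it tends to zero is a closed subspace. It contains `Γ`: a point
`ϱ x ∈ Γ` is approximated by `ϱ y` for some `y ∈ Xₙ` with `d(x, y) ≤ h_{Xₙ,Ω}`, and the
residual of `ϱ x` is at most `‖ϱ x - ϱ y‖`. Hence it contains `H_Γ`.
-/

theorem ContinuousLinearMap.tendsto_zero_of_mem_closure_span {ι 𝕜 E F : Type*}
    [NontriviallyNormedField 𝕜] [NormedAddCommGroup E] [NormedSpace 𝕜 E]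
    [NormedAddCommGroup F] [NormedSpace 𝕜 F] {l : Filter ι} {T : ι → E →L[𝕜] F} {C : ℝ}
    (hT : ∀ i, ‖T i‖ ≤ C) {s : Set E} (hs : ∀ x ∈ s, Tendsto (T · x) l (𝓝 0))
    {x : E} (hx : x ∈ closure (Submodule.span 𝕜 s : Set E)) :
    Tendsto (T · x) l (𝓝 0) := by
  have hequi : Equicontinuous fun i => (T i : E → F) :=
    (NormedSpace.equicontinuous_TFAE T).out 5 1 |>.mp (by exact ⟨C, hT⟩)
  have hclosed : IsClosed {x : E | Tendsto (T · x) l (𝓝 0)} :=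
    hequi.isClosed_setOfPred_tendsto (f := fun _ => 0) continuous_const
  refine closure_minimal (fun y hy => ?_) hclosed hx
  induction hy using Submodule.span_induction with
  | mem y hy => exact hs y hy
  | zero => simpa using tendsto_const_nhds
  | add y z _ _ hy hz => simpa using hy.add hz
  | smul c y _ hy => simpa using hy.const_smul c

theorem tendsto_infEDist_of_tendsto_iSup {Ω ι : Type*} [PseudoMetricSpace Ω] {l : Filter ι}
    {X : ι → Set Ω} (hfill : Tendsto (fun i => ⨆ x : Ω, Metric.infEDist x (X i)) l (𝓝 0))
    (x : Ω) : Tendsto (fun i => Metric.infEDist x (X i)) l (𝓝 0) :=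
  tendsto_of_tendsto_of_tendsto_of_le_of_le tendsto_const_nhds hfill (fun _ => zero_le)
    fun i => le_iSup (fun y => Metric.infEDist y (X i)) x

section Interpolation

variable {H : Type*} [NormedAddCommGroup H] [InnerProductSpace ℝ H]

theorem interp_eq_starProjection (Λ : Finset H) (f : H) :
    interp Λ f = (Submodule.span ℝ (Λ : Set H)).starProjection f :=
  rfl

theorem sub_interp_eq_starProjection_orthogonal (Λ : Finset H) (f : H) :
    f - interp Λ f = (Submodule.span ℝ (Λ : Set H))ᗮ.starProjection f := by
  rw [Submodule.starProjection_orthogonal_val, interp_eq_starProjection]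

theorem norm_sub_interp_le_of_mem_span {Λ : Finset H} (f : H) {v : H}
    (hv : v ∈ Submodule.span ℝ (Λ : Set H)) :
    ‖f - interp Λ f‖ ≤ ‖f - v‖ := by
  rw [interp_eq_starProjection, Submodule.starProjection_minimal]
  refine ciInf_le ⟨0, ?_⟩ (⟨v, hv⟩ : Submodule.span ℝ (Λ : Set H))
  rintro _ ⟨_, rfl⟩
  exact norm_nonneg _

theorem tendsto_norm_sub_interp_image {Ω : Type*} [PseudoMetricSpace Ω] [DecidableEq H]
    {ι : Type*} {l : Filter ι} {ϱ : Ω → H} {x : Ω} (hϱ : ContinuousAt ϱ x)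
    {X : ι → Finset Ω} (hX : Tendsto (fun i => Metric.infEDist x (X i : Set Ω)) l (𝓝 0)) :
    Tendsto (fun i => ‖ϱ x - interp ((X i).image ϱ) (ϱ x)‖) l (𝓝 0) := by
  refine Metric.tendsto_nhds.mpr fun ε hε => ?_
  obtain ⟨δ, hδ, hϱδ⟩ := Metric.continuousAt_iff.mp hϱ ε hε
  filter_upwards [hX.eventually_lt_const (ENNReal.ofReal_pos.mpr hδ)] with i hi
  obtain ⟨y, hy, hxy⟩ := Metric.infEDist_lt_iff.mp hi
  have hyx : dist y x < δ := by rwa [edist_comm, edist_lt_ofReal] at hxy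
  have hspan : ϱ y ∈ Submodule.span ℝ (((X i).image ϱ : Finset H) : Set H) :=
    Submodule.subset_span (by simpa using ⟨y, hy, rfl⟩)
  calc dist ‖ϱ x - interp ((X i).image ϱ) (ϱ x)‖ 0
      = ‖ϱ x - interp ((X i).image ϱ) (ϱ x)‖ := by simp
    _ ≤ ‖ϱ x - ϱ y‖ := norm_sub_interp_le_of_mem_span _ hspan
    _ < ε := by rw [← dist_eq_norm, dist_comm]; exact hϱδ hyx

end Interpolation

theorem stmt_5_general {H : Type*} [NormedAddCommGroup H] [InnerProductSpace ℝ H]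
    [DecidableEq H] {Ω : Type*} [MetricSpace Ω] (Γ : Set H)
    (ϱ : Ω → H) (hsurj : ∀ g ∈ Γ, ∃ x, ϱ x = g)
    (huc : UniformContinuous ϱ)
    (X : ℕ → Finset Ω)
    (hfill : Tendsto (fun n => ⨆ x : Ω, Metric.infEDist x (X n : Set Ω)) atTop (𝓝 0)) :
    ∀ f ∈ closure (Submodule.span ℝ Γ : Set H),
      Tendsto (fun n => ‖f - interp ((X n).image ϱ) f‖) atTop (𝓝 0) := by
  intro f hf
  rw [← tendsto_zero_iff_norm_tendsto_zero]
  simp only [sub_interp_eq_starProjection_orthogonal]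
  refine ContinuousLinearMap.tendsto_zero_of_mem_closure_span
    (fun n => Submodule.starProjection_norm_le _) (fun g hg => ?_) hf
  obtain ⟨x, rfl⟩ := hsurj g hg
  simp only [← sub_interp_eq_starProjection_orthogonal]
  rw [tendsto_zero_iff_norm_tendsto_zero]
  exact tendsto_norm_sub_interp_image huc.continuous.continuousAt
    (tendsto_infEDist_of_tendsto_iSup hfill x)

/-- if `Γ` is linearly independent, `ϱ : Ω → Γ` is a uniformly continuous
bijection, and the fill distances of a nested sequence of finite subsets `X n` in the metric
space `Ω` tend to `0`, then the interpolants on `ϱ(X n)` converge to `f` for every `f` in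
the closed linear span of `Γ`. -/
theorem stmt_5 {H : Type*} [NormedAddCommGroup H] [InnerProductSpace ℝ H] [CompleteSpace H]
    [DecidableEq H] {Ω : Type*} [MetricSpace Ω] (Γ : Set H)
    (hΓli : LinearIndependent (ι := Γ) ℝ Subtype.val)
    (ϱ : Ω → H) (hmem : ∀ x, ϱ x ∈ Γ)
    (hinj : Function.Injective ϱ) (hsurj : ∀ g ∈ Γ, ∃ x, ϱ x = g)
    (huc : UniformContinuous ϱ)
    (X : ℕ → Finset Ω) (hnested : ∀ n, X n ⊆ X (n + 1))
    (hfill : Tendsto (fun n => ⨆ x : Ω, Metric.infEDist x (X n : Set Ω)) atTop (𝓝 0)) :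
    ∀ f ∈ closure (Submodule.span ℝ Γ : Set H),
      Tendsto (fun n => ‖f - interp ((X n).image ϱ) f‖) atTop (𝓝 0) :=
  stmt_5_general Γ ϱ hsurj huc X hfill
end

section
/- Let H be a real Hilbert space, Γ ⊆ H a totally bounded subset, (g_i)_{i∈ℕ} a sequence in Γ, and Λ_n := {g_1,…,g_n} linearly independent for each n ∈ ℕ. Then P_{Λ_n}(g_{n+1}) → 0 as n → ∞. -/
open Filter
open scoped RealInnerProductSpace ENNReal Topology

/-! The span of `{g_0, …, g_{n-1}}` contains every earlier `g_m`, so `P_{Λ_n}(g_n) ≤ ‖g_n - g_m‖`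
for all `m < n`. Hence `P_{Λ_n}(g_n) ≥ ε` forces `g_n` to be `ε`-far from all its predecessors,
and in a totally bounded set this happens only finitely often: two such indices cannot share a
ball of radius `ε / 2` from a finite cover. -/

theorem TotallyBounded.finite_setOf_forall_lt_le_dist {X : Type*} [PseudoMetricSpace X]
    {s : Set X} (hs : TotallyBounded s) {u : ℕ → X} (hu : ∀ n, u n ∈ s) {ε : ℝ} (hε : 0 < ε) :
    {n | ∀ m < n, ε ≤ dist (u n) (u m)}.Finite := by
  obtain ⟨t, ht, hcover⟩ := Metric.totallyBounded_iff.mp hs (ε / 2) (half_pos hε)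
  have hcenter : ∀ n, ∃ c ∈ t, u n ∈ Metric.ball c (ε / 2) := fun n => by
    simpa using hcover (hu n)
  choose c hct hc using hcenter
  have hne : ∀ m n, m < n → n ∈ {n | ∀ m < n, ε ≤ dist (u n) (u m)} → c m ≠ c n := by
    intro m n hmn hn hcmn
    have hclose : dist (u n) (u m) < ε := calc
      dist (u n) (u m) ≤ dist (u n) (c n) + dist (u m) (c n) := dist_triangle_right _ _ _
      _ < ε / 2 + ε / 2 := add_lt_add (hc n) (hcmn ▸ hc m)
      _ = ε := add_halves ε
    exact (hn m hmn).not_gt hclose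
  refine Set.Finite.of_finite_image (f := c) (ht.subset (Set.image_subset_iff.mpr fun n _ => hct n))
    fun m hm n hn hcmn => ?_
  by_contra hmn
  rcases Nat.lt_or_gt_of_ne hmn with hlt | hlt
  · exact hne m n hlt hn hcmn
  · exact hne n m hlt hm hcmn.symm

section PowerFunction

variable {H : Type*} [NormedAddCommGroup H] [InnerProductSpace ℝ H]

theorem powerFn_nonneg (Λ : Finset H) (g : H) : 0 ≤ powerFn Λ g := norm_nonneg _

theorem powerFn_le_norm_sub {Λ : Finset H} {g h : H} (hh : h ∈ Submodule.span ℝ (Λ : Set H)) :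
    powerFn Λ g ≤ ‖g - h‖ := by
  rw [powerFn, interp, Submodule.coe_orthogonalProjectionOnto_apply,
    Submodule.starProjection_minimal]
  exact ciInf_le ⟨0, fun _ ⟨_, hy⟩ => hy ▸ norm_nonneg _⟩ (⟨h, hh⟩ : Submodule.span ℝ (Λ : Set H))

end PowerFunction

theorem stmt_8_general {H : Type*} [NormedAddCommGroup H] [InnerProductSpace ℝ H]
    [DecidableEq H] (Γ : Set H) (hΓ : TotallyBounded Γ)
    (g : ℕ → H) (hmem : ∀ i, g i ∈ Γ) :
    Tendsto (fun n => powerFn ((Finset.range n).image g) (g n)) atTop (𝓝 0) := by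
  have hle : ∀ m n, m < n → powerFn ((Finset.range n).image g) (g n) ≤ dist (g n) (g m) :=
    fun m n hmn => dist_eq_norm (g n) (g m) ▸
      powerFn_le_norm_sub (Submodule.subset_span (by simpa using ⟨m, hmn, rfl⟩))
  refine tendsto_order.2 ⟨fun a ha => .of_forall fun n => ha.trans_le (powerFn_nonneg _ _),
    fun ε hε => ?_⟩
  rw [← Nat.cofinite_eq_atTop]
  filter_upwards [(hΓ.finite_setOf_forall_lt_le_dist hmem hε).eventually_cofinite_notMem]
    with n hn
  simp only [not_forall, not_le] at hn
  obtain ⟨m, hmn, hlt⟩ := hn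
  exact (hle m n hmn).trans_lt hlt

/-- if `Γ` is totally bounded, `(g_i)` is a sequence in `Γ`, and each
`Λ_n = {g_1, …, g_n}` is linearly independent, then `P_{Λ_n}(g_{n+1}) → 0`.
(`0`-indexed: `Λ n = {g_0, …, g_{n-1}}` and the claim is `P_{Λ n}(g_n) → 0`.) -/
theorem stmt_8 {H : Type*} [NormedAddCommGroup H] [InnerProductSpace ℝ H] [CompleteSpace H]
    [DecidableEq H] (Γ : Set H) (hΓ : TotallyBounded Γ)
    (g : ℕ → H) (hmem : ∀ i, g i ∈ Γ)
    (hli : ∀ n, LinearIndependent (ι := (((Finset.range n).image g : Finset H) : Set H))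
      ℝ Subtype.val) :
    Tendsto (fun n => powerFn ((Finset.range n).image g) (g n)) atTop (𝓝 0) :=
  stmt_8_general Γ hΓ g hmem
end

section
/- Let H be a real Hilbert space, β ∈ [0, ∞), Γ ⊆ H totally bounded, and f in the closed linear span H_Γ of Γ. Suppose (g_n)_{n∈ℕ} is a sequence in Γ such that Λ_n := {g_1,…,g_n} is linearly independent for every n and the β-greedy selection rule holds: |⟪f − I_{Λ_n}(f), g_{n+1}⟫|^β · P_{Λ_n}(g_{n+1})^{1−β} = sup_{g∈Γ} |⟪f − I_{Λ_n}(f), g⟫|^β · P_{Λ_n}(g)^{1−β} for every n. Then ‖f − I_{Λ_n}(f)‖ → 0 as n → ∞. -/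
open Filter
open scoped RealInnerProductSpace ENNReal Topology

/-! The residuals `r n = f - I_{Λ n} f` have norm at most `‖f‖`, and the greedy rule bounds the
criterion `|⟪r n, γ⟫| ^ β * P_{Λ n}(γ) ^ (1 - β)` of every `γ ∈ Γ` by `‖f‖ ^ β * P_{Λ n}(g n)`.
Total boundedness forces `P_{Λ n}(g n) → 0`: the indices with `P_{Λ n}(g n) ≥ ε` pick points of `Γ`
at distance `≥ ε` from all earlier ones, so there are finitely many. Since
`|⟪r n, γ⟫| ≤ ‖f‖ P_{Λ n}(γ)` and `P_{Λ n}(γ) ≤ ‖γ‖`, a vanishing criterion forces `⟪r n, γ⟫ → 0`.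
The residuals being bounded, this weak convergence passes to the closed span of `Γ`, which
contains `f`, and `‖r n‖ ^ 2 = ⟪r n, f⟫`. -/

theorem Real.rpow_mul_rpow_one_sub_le {a p C β : ℝ} (hβ : 0 ≤ β) (ha : 0 ≤ a) (hp : 0 ≤ p)
    (hC : 0 ≤ C) (hap : a ≤ C * p) : a ^ β * p ^ (1 - β) ≤ C ^ β * p :=
  calc a ^ β * p ^ (1 - β) ≤ (C * p) ^ β * p ^ (1 - β) :=
        mul_le_mul_of_nonneg_right (Real.rpow_le_rpow ha hap hβ) (Real.rpow_nonneg hp _)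
    _ = C ^ β * p ^ (β + (1 - β)) := by
      rw [Real.mul_rpow hC hp, Real.rpow_add' hp (by norm_num), mul_assoc]
    _ = C ^ β * p := by norm_num

theorem tendsto_zero_of_tendsto_rpow_mul_rpow_one_sub {ι : Type*} {l : Filter ι} {a p : ι → ℝ}
    {β C D : ℝ} (hC : 0 ≤ C) (ha : ∀ i, 0 ≤ a i) (hp : ∀ i, 0 ≤ p i)
    (hap : ∀ i, a i ≤ C * p i) (hpD : ∀ i, p i ≤ D)
    (h : Tendsto (fun i => a i ^ β * p i ^ (1 - β)) l (𝓝 0)) : Tendsto a l (𝓝 0) := by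
  rcases le_or_gt β 1 with hβ1 | hβ1
  · refine squeeze_zero ha (fun i => ?_) (by simpa using h.const_mul (C ^ (1 - β)))
    calc a i = a i ^ β * a i ^ (1 - β) := by
          rw [← Real.rpow_add' (ha i) (by norm_num)]; norm_num
      _ ≤ a i ^ β * (C * p i) ^ (1 - β) :=
          mul_le_mul_of_nonneg_left (Real.rpow_le_rpow (ha i) (hap i) (by linarith))
            (Real.rpow_nonneg (ha i) _)
      _ = C ^ (1 - β) * (a i ^ β * p i ^ (1 - β)) := by rw [Real.mul_rpow hC (hp i)]; ring
  · have hpow : Tendsto (fun i => a i ^ β) l (𝓝 0) := by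
      refine squeeze_zero (fun i => Real.rpow_nonneg (ha i) _) (fun i => ?_)
        (by simpa using h.mul_const (D ^ (β - 1)))
      rcases (hp i).eq_or_lt with hpi | hpi
      · have hai : a i = 0 := le_antisymm (by simpa [← hpi] using hap i) (ha i)
        simp [hai, Real.zero_rpow (by linarith : β ≠ 0)]
      calc a i ^ β = a i ^ β * p i ^ (1 - β) * p i ^ (β - 1) := by
            rw [mul_assoc, ← Real.rpow_add hpi]; norm_num
        _ ≤ a i ^ β * p i ^ (1 - β) * D ^ (β - 1) :=
            mul_le_mul_of_nonneg_left (Real.rpow_le_rpow hpi.le (hpD i) (by linarith))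
              (mul_nonneg (Real.rpow_nonneg (ha i) _) (Real.rpow_nonneg (hp i) _))
    have hβ0 : β ≠ 0 := by linarith
    simpa only [Real.rpow_rpow_inv (ha _) hβ0] using
      hpow.rpow_const_nhds_zero (inv_pos.2 (by linarith : (0 : ℝ) < β))

theorem TotallyBounded.finite_of_le_dist {X : Type*} [PseudoMetricSpace X] {s : Set X}
    (hs : TotallyBounded s) {ε : ℝ} (hε : 0 < ε) {u : ℕ → X} (hu : ∀ n, u n ∈ s) {S : Set ℕ}
    (hS : ∀ n ∈ S, ∀ m < n, ε ≤ dist (u n) (u m)) : S.Finite := by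
  by_contra hinf
  obtain ⟨t, ht, hcover⟩ := Metric.totallyBounded_iff.mp hs (ε / 2) (half_pos hε)
  choose c hct hc using fun n => Set.mem_iUnion₂.mp (hcover (hu n))
  have hclose (m n : ℕ) (hmn : c m = c n) : dist (u n) (u m) < ε := by
    have hm : dist (u m) (c n) < ε / 2 := hmn ▸ hc m
    have hn : dist (u n) (c n) < ε / 2 := hc n
    linarith [dist_triangle_right (u n) (u m) (c n)]
  obtain ⟨m, hm, n, hn, hne, hmn⟩ :=
    Set.Infinite.exists_ne_map_eq_of_mapsTo hinf (fun n _ => hct n) ht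
  rcases hne.lt_or_gt with h | h
  · exact (hS n hn m h).not_gt (hclose m n hmn)
  · exact (hS m hm n h).not_gt (by rw [dist_comm]; exact hclose m n hmn)

section

variable {H : Type*} [NormedAddCommGroup H] [InnerProductSpace ℝ H]

theorem interp_mem_span (Λ : Finset H) (f : H) : interp Λ f ∈ Submodule.span ℝ (Λ : Set H) :=
  Submodule.starProjection_apply_mem _ f

theorem inner_sub_interp_eq_zero (Λ : Finset H) (f : H) {v : H}
    (hv : v ∈ Submodule.span ℝ (Λ : Set H)) : ⟪f - interp Λ f, v⟫ = 0 :=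
  Submodule.starProjection_inner_eq_zero f v hv

theorem norm_sub_interp_le (Λ : Finset H) (f : H) {v : H}
    (hv : v ∈ Submodule.span ℝ (Λ : Set H)) : ‖f - interp Λ f‖ ≤ ‖f - v‖ := by
  rw [interp_eq_starProjection, Submodule.starProjection_minimal]
  exact ciInf_le ⟨0, Set.forall_mem_range.2 fun _ => norm_nonneg _⟩
    (⟨v, hv⟩ : Submodule.span ℝ (Λ : Set H))

theorem norm_sub_interp_le_norm (Λ : Finset H) (f : H) : ‖f - interp Λ f‖ ≤ ‖f‖ := by
  simpa using norm_sub_interp_le Λ f (Submodule.zero_mem _)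

theorem powerFn_le_norm (Λ : Finset H) (x : H) : powerFn Λ x ≤ ‖x‖ :=
  norm_sub_interp_le_norm Λ x

theorem norm_sub_interp_sq (Λ : Finset H) (f : H) :
    ‖f - interp Λ f‖ ^ 2 = ⟪f - interp Λ f, f⟫ := by
  rw [← real_inner_self_eq_norm_sq, inner_sub_right (f - interp Λ f) f,
    inner_sub_interp_eq_zero Λ f (interp_mem_span Λ f), sub_zero]

theorem abs_inner_sub_interp_le (Λ : Finset H) (f x : H) :
    |⟪f - interp Λ f, x⟫| ≤ ‖f - interp Λ f‖ * powerFn Λ x := by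
  have : ⟪f - interp Λ f, x⟫ = ⟪f - interp Λ f, x - interp Λ x⟫ := by
    rw [inner_sub_right, inner_sub_interp_eq_zero Λ f (interp_mem_span Λ x), sub_zero]
  rw [this]
  exact abs_real_inner_le_norm _ _

theorem abs_inner_sub_interp_le_norm_mul_powerFn (Λ : Finset H) (f x : H) :
    |⟪f - interp Λ f, x⟫| ≤ ‖f‖ * powerFn Λ x :=
  (abs_inner_sub_interp_le Λ f x).trans
    (mul_le_mul_of_nonneg_right (norm_sub_interp_le_norm Λ f) (norm_nonneg _))

theorem tendsto_inner_of_mem_closure_span {ι : Type*} {l : Filter ι} {r : ι → H} {C : ℝ}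
    (hC : ∀ i, ‖r i‖ ≤ C) {Γ : Set H} (hΓ : ∀ γ ∈ Γ, Tendsto (fun i => ⟪r i, γ⟫) l (𝓝 0))
    {x : H} (hx : x ∈ closure (Submodule.span ℝ Γ : Set H)) :
    Tendsto (fun i => ⟪r i, x⟫) l (𝓝 0) := by
  let S : Submodule ℝ H :=
    { carrier := {x | Tendsto (fun i => ⟪r i, x⟫) l (𝓝 0)}
      add_mem' := fun {a b} ha hb => by simpa [inner_add_right] using ha.add hb
      zero_mem' := by simpa using tendsto_const_nhds
      smul_mem' := fun c a ha => by simpa [inner_smul_right] using ha.const_mul c }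
  have hbdd : ∃ C, ∀ i, ‖innerSL ℝ (r i)‖ ≤ C :=
    ⟨C, fun i => (innerSL_apply_norm ℝ (r i)).trans_le (hC i)⟩
  have hequi : Equicontinuous fun i => (innerSL ℝ (r i) : H → ℝ) :=
    ((NormedSpace.equicontinuous_TFAE fun i => innerSL ℝ (r i)).out 5 1).1 hbdd
  have hS : IsClosed (S : Set H) :=
    hequi.isClosed_setOfPred_tendsto (f := 0) continuous_const
  exact closure_minimal (Submodule.span_le.2 (show Γ ⊆ S from hΓ)) hS hx

noncomputable def greedyCriterion (β : ℝ) (Λ : Finset H) (f x : H) : ℝ :=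
  |⟪f - interp Λ f, x⟫| ^ β * powerFn Λ x ^ (1 - β)

theorem greedyCriterion_nonneg (β : ℝ) (Λ : Finset H) (f x : H) : 0 ≤ greedyCriterion β Λ f x :=
  mul_nonneg (Real.rpow_nonneg (abs_nonneg _) _) (Real.rpow_nonneg (norm_nonneg _) _)

theorem greedyCriterion_le {β : ℝ} (hβ : 0 ≤ β) (Λ : Finset H) (f x : H) :
    greedyCriterion β Λ f x ≤ ‖f‖ ^ β * powerFn Λ x :=
  Real.rpow_mul_rpow_one_sub_le hβ (abs_nonneg _) (norm_nonneg _) (norm_nonneg f)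
    (abs_inner_sub_interp_le_norm_mul_powerFn Λ f x)

theorem tendsto_inner_sub_interp_of_tendsto_greedyCriterion {ι : Type*} {l : Filter ι} {β : ℝ}
    {Λ : ι → Finset H} (f x : H)
    (h : Tendsto (fun i => greedyCriterion β (Λ i) f x) l (𝓝 0)) :
    Tendsto (fun i => ⟪f - interp (Λ i) f, x⟫) l (𝓝 0) :=
  tendsto_zero_iff_abs_tendsto_zero _ |>.2 <|
    tendsto_zero_of_tendsto_rpow_mul_rpow_one_sub (norm_nonneg f) (fun _ => abs_nonneg _)
      (fun _ => norm_nonneg _) (fun i => abs_inner_sub_interp_le_norm_mul_powerFn (Λ i) f x)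
      (fun i => powerFn_le_norm (Λ i) x) h

theorem tendsto_powerFn_image_range [DecidableEq H] {Γ : Set H} (hΓ : TotallyBounded Γ)
    {g : ℕ → H} (hg : ∀ n, g n ∈ Γ) :
    Tendsto (fun n => powerFn ((Finset.range n).image g) (g n)) atTop (𝓝 0) := by
  refine tendsto_order.2
    ⟨fun a ha => Eventually.of_forall fun n => ha.trans_le (norm_nonneg _), fun ε hε => ?_⟩
  have hfin : {n | ε ≤ powerFn ((Finset.range n).image g) (g n)}.Finite := by
    refine hΓ.finite_of_le_dist hε hg fun n hn m hmn => hn.trans ?_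
    rw [dist_eq_norm]
    exact norm_sub_interp_le _ _ (Submodule.subset_span (by simpa using ⟨m, hmn, rfl⟩))
  simpa [Nat.cofinite_eq_atTop] using hfin.eventually_cofinite_notMem

end

theorem stmt_13_general {H : Type*} [NormedAddCommGroup H] [InnerProductSpace ℝ H]
    [DecidableEq H] (β : ℝ) (hβ : 0 ≤ β) (Γ : Set H) (hΓ : TotallyBounded Γ)
    (f : H) (hf : f ∈ closure (Submodule.span ℝ Γ : Set H))
    (g : ℕ → H) (hmem : ∀ n, g n ∈ Γ)
    (hgreedy : ∀ (n : ℕ), ∀ γ ∈ Γ,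
      |⟪f - interp ((Finset.range n).image g) f, γ⟫| ^ β *
          powerFn ((Finset.range n).image g) γ ^ (1 - β) ≤
        |⟪f - interp ((Finset.range n).image g) f, g n⟫| ^ β *
          powerFn ((Finset.range n).image g) (g n) ^ (1 - β)) :
    Tendsto (fun n => ‖f - interp ((Finset.range n).image g) f‖) atTop (𝓝 0) := by
  set Λ : ℕ → Finset H := fun n => (Finset.range n).image g
  have hΓ_lim (γ : H) (hγ : γ ∈ Γ) : Tendsto (fun n => ⟪f - interp (Λ n) f, γ⟫) atTop (𝓝 0) :=
    tendsto_inner_sub_interp_of_tendsto_greedyCriterion f γ <|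
      squeeze_zero (fun n => greedyCriterion_nonneg β (Λ n) f γ)
        (fun n => (hgreedy n γ hγ :
          greedyCriterion β (Λ n) f γ ≤ greedyCriterion β (Λ n) f (g n)).trans
            (greedyCriterion_le hβ (Λ n) f (g n)))
        (by simpa using (tendsto_powerFn_image_range hΓ hmem).const_mul (‖f‖ ^ β))
  have hsq_lim : Tendsto (fun n => ‖f - interp (Λ n) f‖ ^ 2) atTop (𝓝 0) := by
    simpa only [norm_sub_interp_sq] using
      tendsto_inner_of_mem_closure_span (fun n => norm_sub_interp_le_norm (Λ n) f) hΓ_lim hf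
  simpa [Real.sqrt_sq (norm_nonneg _)] using hsq_lim.sqrt

/-- convergence of the `β`-greedy algorithm, `β ∈ [0, ∞)`, on a totally bounded
set `Γ`. The sequence is `0`-indexed: `Λ n = {g_0, …, g_{n-1}}`, and the selection rule states
that `g_n` maximizes `γ ↦ |⟪f - I_{Λ n}(f), γ⟫|^β * P_{Λ n}(γ)^(1-β)` over `γ ∈ Γ`
(here `^` is the real power `Real.rpow`). -/
theorem stmt_13 {H : Type*} [NormedAddCommGroup H] [InnerProductSpace ℝ H] [CompleteSpace H]
    [DecidableEq H] (β : ℝ) (hβ : 0 ≤ β) (Γ : Set H) (hΓ : TotallyBounded Γ)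
    (f : H) (hf : f ∈ closure (Submodule.span ℝ Γ : Set H))
    (g : ℕ → H) (hmem : ∀ n, g n ∈ Γ)
    (hli : ∀ n, LinearIndependent (ι := (((Finset.range n).image g : Finset H) : Set H))
      ℝ Subtype.val)
    (hgreedy : ∀ (n : ℕ), ∀ γ ∈ Γ,
      |⟪f - interp ((Finset.range n).image g) f, γ⟫| ^ β *
          powerFn ((Finset.range n).image g) γ ^ (1 - β) ≤
        |⟪f - interp ((Finset.range n).image g) f, g n⟫| ^ β *
          powerFn ((Finset.range n).image g) (g n) ^ (1 - β)) :
    Tendsto (fun n => ‖f - interp ((Finset.range n).image g) f‖) atTop (𝓝 0) :=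
  stmt_13_general β hβ Γ hΓ f hf g hmem hgreedy
end

section
/- Let H be a real Hilbert space, f ∈ H, and (g_n)_{n∈ℕ} a sequence in H such that Λ_n := {g_1,…,g_n} is linearly independent for each n. Then the limit lim_{n→∞} ‖I_{Λ_n}(f)‖² exists and equals ‖I_{Λ_1}(f)‖² + Σ_{n=1}^∞ |⟪f − I_{Λ_n}(f), g_{n+1}⟫|² / P_{Λ_n}(g_{n+1})², this value is at most ‖f‖², and consequently |⟪f − I_{Λ_n}(f), g_{n+1}⟫| / P_{Λ_n}(g_{n+1}) → 0 as n → ∞. -/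
/-!
Adjoining `x` to `Λ` enlarges `span Λ` by the line through the residual `y = x - I_Λ(x)`, which is
orthogonal to `span Λ`. Hence `I_{Λ ∪ {x}} = I_Λ + proj_{ℝ y}`, and Pythagoras gives
`‖I_{Λ ∪ {x}} f‖² = ‖I_Λ f‖² + ⟪f - I_Λ f, x⟫² / P_Λ(x)²`. Thus `‖I_{Λ_n} f‖²` are the partial
sums of the squared ratios; bounded by `‖f‖²`, they converge, and the increments tend to `0`.
-/

open Filter
open scoped RealInnerProductSpace ENNReal Topology

/-- The residual ratio `|⟪f - I_{Λ n}(f), g_{n+1}⟫| / P_{Λ n}(g_{n+1})` appearing in the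
`f/P`-greedy analysis (`0`-indexed: `Λ n = {g_0, …, g_{n-1}}` and the next element is `g n`). -/
noncomputable def greedyRatio {H : Type*} [NormedAddCommGroup H] [InnerProductSpace ℝ H]
    [DecidableEq H] (f : H) (g : ℕ → H) (n : ℕ) : ℝ :=
  |⟪f - interp ((Finset.range n).image g) f, g n⟫| / powerFn ((Finset.range n).image g) (g n)

namespace Submodule

variable {E : Type*} [NormedAddCommGroup E] [InnerProductSpace ℝ E]

theorem starProjection_congr {K L : Submodule ℝ E} [K.HasOrthogonalProjection]
    [L.HasOrthogonalProjection] (h : K = L) : K.starProjection = L.starProjection := by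
  subst h; rfl

theorem IsOrtho.sub_starProjection_add_starProjection_mem_orthogonal {K L : Submodule ℝ E}
    [K.HasOrthogonalProjection] [L.HasOrthogonalProjection] (h : K ⟂ L) (f : E) :
    f - (K.starProjection f + L.starProjection f) ∈ (K ⊔ L)ᗮ := by
  rw [← inf_orthogonal, sub_add_eq_sub_sub]
  refine ⟨sub_mem (K.sub_starProjection_mem_orthogonal f) (h.symm (L.starProjection_apply_mem f)),
    ?_⟩
  rw [sub_right_comm]
  exact sub_mem (L.sub_starProjection_mem_orthogonal f) (h (K.starProjection_apply_mem f))

theorem IsOrtho.hasOrthogonalProjection_sup {K L : Submodule ℝ E} [K.HasOrthogonalProjection]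
    [L.HasOrthogonalProjection] (h : K ⟂ L) : (K ⊔ L).HasOrthogonalProjection :=
  ⟨fun f => ⟨_, add_mem (mem_sup_left (K.starProjection_apply_mem f))
      (mem_sup_right (L.starProjection_apply_mem f)),
    h.sub_starProjection_add_starProjection_mem_orthogonal f⟩⟩

theorem IsOrtho.starProjection_sup_apply {K L : Submodule ℝ E} [K.HasOrthogonalProjection]
    [L.HasOrthogonalProjection] [(K ⊔ L).HasOrthogonalProjection] (h : K ⟂ L) (f : E) :
    (K ⊔ L).starProjection f = K.starProjection f + L.starProjection f :=
  eq_starProjection_of_mem_orthogonal (add_mem (mem_sup_left (K.starProjection_apply_mem f))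
      (mem_sup_right (L.starProjection_apply_mem f)))
    (h.sub_starProjection_add_starProjection_mem_orthogonal f)

theorem norm_starProjection_span_singleton_sq (v f : E) :
    ‖(ℝ ∙ v).starProjection f‖ ^ 2 = ⟪v, f⟫ ^ 2 / ‖v‖ ^ 2 := by
  rcases eq_or_ne v 0 with rfl | hv
  · simp
  rw [starProjection_singleton]
  simp only [norm_smul, Real.norm_eq_abs, mul_pow, div_pow, sq_abs, RCLike.ofReal_real_eq_id, id]
  field_simp [norm_ne_zero_iff.mpr hv]

variable (K : Submodule ℝ E) [K.HasOrthogonalProjection]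

theorem sup_span_singleton_eq_sup_span_starProjection_orthogonal (x : E) :
    K ⊔ ℝ ∙ x = K ⊔ ℝ ∙ Kᗮ.starProjection x := by
  refine le_antisymm (sup_le le_sup_left ?_) (sup_le le_sup_left ?_) <;>
    rw [span_singleton_le_iff_mem]
  · have := add_mem (mem_sup_left (K.starProjection_apply_mem x))
      (mem_sup_right (mem_span_singleton_self (Kᗮ.starProjection x)))
    rwa [starProjection_add_starProjection_orthogonal] at this
  · rw [starProjection_orthogonal_val]
    exact sub_mem (mem_sup_right (mem_span_singleton_self x))
      (mem_sup_left (K.starProjection_apply_mem x))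

theorem isOrtho_span_starProjection_orthogonal (x : E) : K ⟂ ℝ ∙ Kᗮ.starProjection x :=
  IsOrtho.symm ((span_singleton_le_iff_mem _ _).mpr (Kᗮ.starProjection_apply_mem x))

instance hasOrthogonalProjection_sup_span_singleton (x : E) :
    (K ⊔ ℝ ∙ x).HasOrthogonalProjection := by
  rw [sup_span_singleton_eq_sup_span_starProjection_orthogonal]
  exact (K.isOrtho_span_starProjection_orthogonal x).hasOrthogonalProjection_sup

theorem norm_starProjection_sup_span_singleton_sq (x f : E) :
    ‖(K ⊔ ℝ ∙ x).starProjection f‖ ^ 2 = ‖K.starProjection f‖ ^ 2 +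
      ⟪f - K.starProjection f, x⟫ ^ 2 / ‖x - K.starProjection x‖ ^ 2 := by
  have hortho := K.isOrtho_span_starProjection_orthogonal x
  rw [starProjection_congr (K.sup_span_singleton_eq_sup_span_starProjection_orthogonal x),
    hortho.starProjection_sup_apply, norm_add_sq_real,
    hortho.inner_eq (K.starProjection_apply_mem f) (starProjection_apply_mem _ f), mul_zero,
    add_zero, norm_starProjection_span_singleton_sq, ← starProjection_orthogonal_val,
    ← starProjection_orthogonal_val, inner_starProjection_left_eq_right, real_inner_comm]

end Submodule

section Interpolation

variable {H : Type*} [NormedAddCommGroup H] [InnerProductSpace ℝ H]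

theorem norm_interp_le (Λ : Finset H) (f : H) : ‖interp Λ f‖ ≤ ‖f‖ :=
  Submodule.norm_starProjection_apply_le _ f

theorem sq_norm_interp_insert [DecidableEq H] (x : H) (Λ : Finset H) (f : H) :
    ‖interp (insert x Λ) f‖ ^ 2
      = ‖interp Λ f‖ ^ 2 + (|⟪f - interp Λ f, x⟫| / powerFn Λ x) ^ 2 := by
  have hspan : Submodule.span ℝ ((insert x Λ : Finset H) : Set H)
      = Submodule.span ℝ (Λ : Set H) ⊔ ℝ ∙ x := by
    rw [Finset.coe_insert, Submodule.span_insert, sup_comm]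
  rw [div_pow, sq_abs, powerFn, interp_eq_starProjection, interp_eq_starProjection,
    interp_eq_starProjection, Submodule.starProjection_congr hspan]
  exact Submodule.norm_starProjection_sup_span_singleton_sq _ x f

theorem sq_norm_interp_range_succ [DecidableEq H] (f : H) (g : ℕ → H) (n : ℕ) :
    ‖interp ((Finset.range (n + 1)).image g) f‖ ^ 2
      = ‖interp ((Finset.range n).image g) f‖ ^ 2 + greedyRatio f g n ^ 2 := by
  rw [Finset.range_add_one, Finset.image_insert]
  exact sq_norm_interp_insert (g n) _ f

end Interpolation

theorem summable_and_tendsto_of_succ_eq_add {a b : ℕ → ℝ} {C : ℝ}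
    (hab : ∀ n, a (n + 1) = a n + b n) (hb : ∀ n, 0 ≤ b n) (ha : ∀ n, a n ≤ C) :
    Summable b ∧ Tendsto a atTop (𝓝 (a 0 + ∑' n, b n)) := by
  have hpartial : ∀ n, a n = a 0 + ∑ k ∈ Finset.range n, b k := fun n => by
    have := Finset.sum_range_sub a n
    simp only [hab, add_sub_cancel_left] at this
    linarith
  have hb_sum : Summable b :=
    summable_of_sum_range_le (c := C - a 0) hb fun n => by linarith [ha n, hpartial n]
  refine ⟨hb_sum, ?_⟩
  simpa only [← hpartial] using (tendsto_const_nhds (x := a 0)).add hb_sum.hasSum.tendsto_sum_nat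

theorem Summable.tendsto_atTop_zero_of_sq {r : ℕ → ℝ} (h : Summable fun n => r n ^ 2) :
    Tendsto r atTop (𝓝 0) := by
  have := h.tendsto_atTop_zero.sqrt
  simp only [Real.sqrt_sq_eq_abs, Real.sqrt_zero] at this
  exact tendsto_zero_iff_abs_tendsto_zero r |>.mpr this

theorem stmt_15_general {H : Type*} [NormedAddCommGroup H] [InnerProductSpace ℝ H]
    [DecidableEq H] (f : H) (g : ℕ → H) :
    Summable (fun k : ℕ => greedyRatio f g (k + 1) ^ 2) ∧
      Tendsto (fun n => ‖interp ((Finset.range n).image g) f‖ ^ 2) atTop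
        (𝓝 (‖interp ((Finset.range 1).image g) f‖ ^ 2 +
          ∑' k : ℕ, greedyRatio f g (k + 1) ^ 2)) ∧
      ‖interp ((Finset.range 1).image g) f‖ ^ 2 +
          ∑' k : ℕ, greedyRatio f g (k + 1) ^ 2 ≤ ‖f‖ ^ 2 ∧
      Tendsto (fun n => greedyRatio f g n) atTop (𝓝 0) := by
  set a : ℕ → ℝ := fun n => ‖interp ((Finset.range n).image g) f‖ ^ 2
  have hbound : ∀ n, a n ≤ ‖f‖ ^ 2 := fun n =>
    pow_le_pow_left₀ (norm_nonneg _) (norm_interp_le _ f) 2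
  obtain ⟨hsum, hlim⟩ := summable_and_tendsto_of_succ_eq_add (a := fun n => a (n + 1))
    (fun n => sq_norm_interp_range_succ f g (n + 1)) (fun _ => sq_nonneg _) (fun _ => hbound _)
  have htend := (tendsto_add_atTop_iff_nat 1).mp hlim
  refine ⟨hsum, htend, le_of_tendsto' htend hbound, ?_⟩
  exact (tendsto_add_atTop_iff_nat 1).mp hsum.tendsto_atTop_zero_of_sq

/-- the limit `lim_n ‖I_{Λ n}(f)‖²` exists and equals
`‖I_{Λ 1}(f)‖² + ∑_{k=1}^∞ (|⟪f - I_{Λ k}(f), g_{k+1}⟫| / P_{Λ k}(g_{k+1}))²`, this value is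
at most `‖f‖²`, and consequently the residual ratios tend to `0`. -/
theorem stmt_15 {H : Type*} [NormedAddCommGroup H] [InnerProductSpace ℝ H] [CompleteSpace H]
    [DecidableEq H] (f : H) (g : ℕ → H)
    (hli : ∀ n, LinearIndependent (ι := (((Finset.range n).image g : Finset H) : Set H))
      ℝ Subtype.val) :
    Summable (fun k : ℕ => greedyRatio f g (k + 1) ^ 2) ∧
      Tendsto (fun n => ‖interp ((Finset.range n).image g) f‖ ^ 2) atTop
        (𝓝 (‖interp ((Finset.range 1).image g) f‖ ^ 2 +
          ∑' k : ℕ, greedyRatio f g (k + 1) ^ 2)) ∧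
      ‖interp ((Finset.range 1).image g) f‖ ^ 2 +
          ∑' k : ℕ, greedyRatio f g (k + 1) ^ 2 ≤ ‖f‖ ^ 2 ∧
      Tendsto (fun n => greedyRatio f g n) atTop (𝓝 0) :=
  stmt_15_general f g
end
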